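/- Let X be a random variable on a standard probability space, let g and h be measurable functions, and set Y = g(X) and Z = h(Y). Then the information loss of the cascade is additive: L(X→Z) = L(X→Y) + L(Y→Z); equivalently, H(X|Z) = H(X|Y) + H(Y|Z). -/

import Mathlib

open MeasureTheory ProbabilityTheory Filter Set
open scoped ENNReal Topology

noncomputable section

/-- Base-2 entropy of the discrete (atomic) part of a measure. -/
def pmfEntropy {β : Type*} [MeasurableSpace β] (ν : Measure β) : ℝ≥0∞ :=
  ∑' b : β, ENNReal.ofReal (-((ν {b}).toReal * Real.logb 2 (ν {b}).toReal))

/-- Conditional entropy `H(X | Y)` (of a discretely supported `X`) given `Y`,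
computed through the regular conditional distribution of `X` given `Y`. -/
def condEnt {α β γ : Type*} [MeasurableSpace α] [MeasurableSpace β] [StandardBorelSpace β]
    [Nonempty β] [MeasurableSpace γ] (μ : Measure α) [IsFiniteMeasure μ]
    (X : α → β) (Y : α → γ) : ℝ≥0∞ :=
  ∫⁻ y, pmfEntropy (condDistrib X Y μ y) ∂(μ.map Y)

/-- Componentwise uniform quantization `X̂ₙ = ⌊2ⁿ X⌋ / 2ⁿ`. -/
def quant {ι : Type*} (n : ℕ) (x : ι → ℝ) : ι → ℝ :=
  fun i => (⌊(2 : ℝ) ^ n * x i⌋ : ℝ) / (2 : ℝ) ^ n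

/-- `H(X̂ₙ)`, entropy of the quantized input. -/
def entQ {α ι : Type*} [MeasurableSpace α] [Fintype ι] (μ : Measure α)
    (X : α → ι → ℝ) (n : ℕ) : ℝ≥0∞ :=
  pmfEntropy (μ.map fun a => quant n (X a))

/-- `H(X̂ₙ | Y)`. -/
def condEntQ {α ι γ : Type*} [MeasurableSpace α] [Fintype ι] [MeasurableSpace γ]
    (μ : Measure α) [IsFiniteMeasure μ] (X : α → ι → ℝ) (Y : α → γ) (n : ℕ) : ℝ≥0∞ :=
  condEnt μ (fun a => quant n (X a)) Y

/-- Information loss `L(X→Y) = H(X|Y) = limₙ H(X̂ₙ|Y)`; since the sequence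
`H(X̂ₙ|Y)` is nondecreasing in `n` the limit equals the supremum. -/
def infoLoss {α ι γ : Type*} [MeasurableSpace α] [Fintype ι] [MeasurableSpace γ]
    (μ : Measure α) [IsFiniteMeasure μ] (X : α → ι → ℝ) (Y : α → γ) : ℝ≥0∞ :=
  ⨆ n : ℕ, condEntQ μ X Y n

/-- The sequence `H(X̂ₙ|Y)/H(X̂ₙ)` whose limit is the relative information loss. -/
def relLossSeq {α ι γ : Type*} [MeasurableSpace α] [Fintype ι] [MeasurableSpace γ]
    (μ : Measure α) [IsFiniteMeasure μ] (X : α → ι → ℝ) (Y : α → γ) (n : ℕ) : ℝ :=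
  (condEntQ μ X Y n).toReal / (entQ μ X n).toReal

/-- The sequence `I(X̂ₙ;Y)/H(X̂ₙ) = (H(X̂ₙ) - H(X̂ₙ|Y))/H(X̂ₙ)` whose limit is the
relative information transfer. -/
def relTransSeq {α ι γ : Type*} [MeasurableSpace α] [Fintype ι] [MeasurableSpace γ]
    (μ : Measure α) [IsFiniteMeasure μ] (X : α → ι → ℝ) (Y : α → γ) (n : ℕ) : ℝ :=
  ((entQ μ X n).toReal - (condEntQ μ X Y n).toReal) / (entQ μ X n).toReal

/-- `H(ν̂ₙ)` for a measure on `ℝᴺ` (quantized entropy of a distribution). -/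
def entQM {ι : Type*} [Fintype ι] (ν : Measure (ι → ℝ)) (n : ℕ) : ℝ≥0∞ :=
  pmfEntropy (ν.map (quant n))


/-!
Disintegrating along `W`, `L(X → W) = ∫ Ĥ(P_{X|W=w}) dP_W(w)`, where `Ĥ ν = ∫ -log₂ ν{x} dν(x)`
is the Shannon entropy of `ν` (infinite unless `ν` is purely atomic): the quantized entropy
`H(ν̂ₙ)` is the integral of `-log₂ ν(cellₙ(x))`, which increases to `-log₂ ν{x}` as the dyadic
cells shrink to `x`, so monotone convergence applies twice.

For the cascade, `P_{X|Z=z}` is the mixture of the `P_{X|Y=y}` over `y ~ P_{Y|Z=z}`, and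
`P_{X|Y=y}` lives on the fibre `g⁻¹{y}`. As the fibres are disjoint, an atom `x` has mass
`P_{Y|Z=z}{g x} · P_{X|Y=g x}{x}`, so surprisals add and
`Ĥ(P_{X|Z=z}) = ∫ Ĥ(P_{X|Y=y}) dP_{Y|Z=z}(y) + Ĥ(P_{Y|Z=z})`; integrating over `z` gives the
claim.
-/

/-- `-log₂ p`, with the value `∞` at `0` that makes it continuous on `[0, ∞]`. -/
def surprisal (p : ℝ≥0∞) : ℝ≥0∞ :=
  if p = 0 then ∞ else ENNReal.ofReal (-Real.logb 2 p.toReal)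

@[simp] lemma surprisal_zero : surprisal 0 = ∞ := if_pos rfl

lemma surprisal_of_ne_zero {p : ℝ≥0∞} (hp : p ≠ 0) :
    surprisal p = ENNReal.ofReal (-Real.logb 2 p.toReal) := if_neg hp

@[simp] lemma surprisal_top : surprisal ∞ = 0 := by simp [surprisal_of_ne_zero]

lemma surprisal_eq_zero_of_one_le {p : ℝ≥0∞} (hp : 1 ≤ p) : surprisal p = 0 := by
  rcases eq_or_ne p ∞ with rfl | hp'
  · exact surprisal_top
  rw [surprisal_of_ne_zero (one_pos.trans_le hp).ne', ENNReal.ofReal_eq_zero, neg_nonpos]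
  exact Real.logb_nonneg one_lt_two (by simpa using ENNReal.toReal_mono hp' hp)

lemma antitone_surprisal : Antitone surprisal := by
  intro p q hpq
  rcases eq_or_ne p 0 with rfl | hp
  · simp
  rcases eq_or_ne q ∞ with rfl | hq
  · simp
  rw [surprisal_of_ne_zero hp, surprisal_of_ne_zero (pos_of_ne_zero hp |>.trans_le hpq).ne']
  refine ENNReal.ofReal_le_ofReal (neg_le_neg (Real.logb_le_logb_of_le one_lt_two ?_ ?_))
  · exact ENNReal.toReal_pos hp (ne_top_of_le_ne_top hq hpq)
  · exact ENNReal.toReal_mono hq hpq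

lemma surprisal_mul {p q : ℝ≥0∞} (hp : p ≤ 1) (hq : q ≤ 1) :
    surprisal (p * q) = surprisal p + surprisal q := by
  rcases eq_or_ne p 0 with rfl | hp0
  · simp
  rcases eq_or_ne q 0 with rfl | hq0
  · simp
  have hp' : p ≠ ∞ := ne_top_of_le_ne_top ENNReal.one_ne_top hp
  have hq' : q ≠ ∞ := ne_top_of_le_ne_top ENNReal.one_ne_top hq
  have hlog {r : ℝ≥0∞} (hr : r ≤ 1) : 0 ≤ -Real.logb 2 r.toReal :=
    neg_nonneg.2 (Real.logb_nonpos one_lt_two ENNReal.toReal_nonneg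
      (ENNReal.toReal_le_of_le_ofReal zero_le_one (by simpa using hr)))
  rw [surprisal_of_ne_zero (mul_ne_zero hp0 hq0), surprisal_of_ne_zero hp0,
    surprisal_of_ne_zero hq0, ← ENNReal.ofReal_add (hlog hp) (hlog hq), ENNReal.toReal_mul,
    Real.logb_mul (ENNReal.toReal_pos hp0 hp').ne' (ENNReal.toReal_pos hq0 hq').ne', neg_add]

lemma continuous_surprisal : Continuous surprisal := by
  refine continuous_iff_continuousAt.2 fun p => ?_
  rcases eq_or_ne p 0 with rfl | hp0
  · refine continuousWithinAt_compl_self.1 ?_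
    have hpos : Tendsto ENNReal.toReal (𝓝[≠] 0) (𝓝[>] 0) := by
      refine tendsto_nhdsWithin_iff.2 ⟨?_, ?_⟩
      · simpa using (ENNReal.tendsto_toReal ENNReal.zero_ne_top).mono_left nhdsWithin_le_nhds
      · filter_upwards [self_mem_nhdsWithin, nhdsWithin_le_nhds (Iio_mem_nhds ENNReal.zero_lt_top)]
          with q hq0 hqtop using ENNReal.toReal_pos hq0 hqtop.ne
    have hlim := ENNReal.tendsto_ofReal_atTop.comp
      (tendsto_neg_atBot_atTop.comp ((Real.tendsto_logb_nhdsGT_zero one_lt_two).comp hpos))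
    rw [ContinuousWithinAt, surprisal_zero]
    exact hlim.congr' (eventually_nhdsWithin_of_forall fun q hq => (surprisal_of_ne_zero hq).symm)
  rcases eq_or_ne p ∞ with rfl | hp
  · refine (continuousAt_const (y := 0)).congr ?_
    filter_upwards [Ioi_mem_nhds ENNReal.one_lt_top] with q hq
    exact (surprisal_eq_zero_of_one_le hq.le).symm
  refine ContinuousAt.congr ?_ (Filter.eventuallyEq_of_mem (compl_singleton_mem_nhds hp0)
    fun q hq => (surprisal_of_ne_zero hq).symm)
  exact ENNReal.continuous_ofReal.continuousAt.comp
    ((ENNReal.continuousAt_toReal hp).logb (ENNReal.toReal_pos hp0 hp).ne').neg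

lemma ofReal_neg_mul_logb_eq_mul_surprisal (p : ℝ≥0∞) :
    ENNReal.ofReal (-(p.toReal * Real.logb 2 p.toReal)) = p * surprisal p := by
  rcases eq_or_ne p 0 with rfl | hp0
  · simp
  rcases eq_or_ne p ∞ with rfl | hp
  · simp
  rw [surprisal_of_ne_zero hp0, ← mul_neg, ENNReal.ofReal_mul ENNReal.toReal_nonneg,
    ENNReal.ofReal_toReal hp]

lemma pmfEntropy_eq_tsum {β : Type*} [MeasurableSpace β] (ν : Measure β) :
    pmfEntropy ν = ∑' b, ν {b} * surprisal (ν {b}) := by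
  simp only [pmfEntropy, ofReal_neg_mul_logb_eq_mul_surprisal]

def entropy {β : Type*} [MeasurableSpace β] (ν : Measure β) : ℝ≥0∞ :=
  ∫⁻ x, surprisal (ν {x}) ∂ν

section Atoms

variable {β : Type*} [MeasurableSpace β] [MeasurableSingletonClass β]

lemma measurable_measure_singleton (ν : Measure β) [IsFiniteMeasure ν] :
    Measurable fun x => ν {x} := by
  have hA : {x | ν {x} ≠ 0}.Countable := by
    simpa [pos_iff_ne_zero] using Measure.countable_meas_level_set_pos (μ := ν) measurable_id
  have := hA.to_subtype
  refine measurable_of_restrict_of_restrict_compl hA.measurableSet (measurable_of_countable _) ?_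
  convert measurable_const (a := (0 : ℝ≥0∞)) with x
  exact not_not.1 x.2

lemma measurable_surprisal_measure_singleton (ν : Measure β) [IsFiniteMeasure ν] :
    Measurable fun x => surprisal (ν {x}) :=
  continuous_surprisal.measurable.comp (measurable_measure_singleton ν)

lemma entropy_eq_pmfEntropy_of_countable {ν : Measure β} {s : Set β} (hs : s.Countable)
    (hν : ν sᶜ = 0) : entropy ν = pmfEntropy ν := by
  have hsupp : Function.support (fun x => ν {x} * surprisal (ν {x})) ⊆ s := fun x hx => by
    by_contra hxs
    exact hx (by simp [measure_mono_null (singleton_subset_iff.2 hxs) hν])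
  have hrestrict : ∫⁻ x, surprisal (ν {x}) ∂ν = ∫⁻ x in s, surprisal (ν {x}) ∂ν := by
    rw [Measure.restrict_eq_self_of_ae_mem (mem_ae_iff.2 hν)]
  rw [entropy, hrestrict, lintegral_countable _ hs, pmfEntropy_eq_tsum,
    ← tsum_subtype_eq_of_support_subset hsupp]
  simp_rw [mul_comm]

end Atoms

section Map

variable {β β' : Type*} [MeasurableSpace β] [MeasurableSpace β'] [MeasurableSingletonClass β']
  {q : β → β'}

lemma pmfEntropy_map_eq_lintegral (ν : Measure β) [IsFiniteMeasure ν] (hq : Measurable q)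
    (hrange : (range q).Countable) :
    pmfEntropy (ν.map q) = ∫⁻ x, surprisal (ν (q ⁻¹' {q x})) ∂ν := by
  have hcompl : ν.map q (range q)ᶜ = 0 := by
    simp [Measure.map_apply hq hrange.measurableSet.compl]
  rw [← entropy_eq_pmfEntropy_of_countable hrange hcompl, entropy,
    lintegral_map (measurable_surprisal_measure_singleton _) hq]
  simp_rw [Measure.map_apply hq (measurableSet_singleton _)]

lemma pmfEntropy_map_eq_tsum_range (ν : Measure β) (hq : Measurable q) :
    pmfEntropy (ν.map q) = ∑' c : range q, ν (q ⁻¹' {↑c}) * surprisal (ν (q ⁻¹' {↑c})) := by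
  have hsupp : Function.support (fun c => ν.map q {c} * surprisal (ν.map q {c})) ⊆ range q :=
    fun c hc => by
      by_contra hcq
      exact hc (by simp [Measure.map_apply hq (measurableSet_singleton c),
        preimage_singleton_eq_empty.2 hcq])
  rw [pmfEntropy_eq_tsum, ← tsum_subtype_eq_of_support_subset hsupp]
  simp_rw [Measure.map_apply hq (measurableSet_singleton _)]

lemma measurable_pmfEntropy_map {γ : Type*} [MeasurableSpace γ] (κ : Kernel γ β)
    (hq : Measurable q) (hrange : (range q).Countable) :
    Measurable fun w => pmfEntropy ((κ w).map q) := by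
  have := hrange.to_subtype
  simp_rw [pmfEntropy_map_eq_tsum_range _ hq]
  refine Measurable.tsum fun c => ?_
  have hc := Kernel.measurable_coe κ (hq (measurableSet_singleton (c : β')))
  exact hc.mul (continuous_surprisal.measurable.comp hc)

end Map

section Quantization

variable {ι : Type*}

lemma measurable_quant (n : ℕ) : Measurable (quant (ι := ι) n) :=
  measurable_pi_lambda _ fun i =>
    (measurable_of_countable fun k : ℤ => (k : ℝ) / 2 ^ n).comp
      ((measurable_pi_apply i).const_mul _).floor

lemma countable_range_quant [Finite ι] (n : ℕ) : (range (quant (ι := ι) n)).Countable :=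
  (countable_range fun k : ι → ℤ => fun i => (k i : ℝ) / 2 ^ n).mono <| by
    rintro _ ⟨x, rfl⟩
    exact ⟨fun i => ⌊(2 : ℝ) ^ n * x i⌋, rfl⟩

lemma quant_quant_succ (n : ℕ) (x : ι → ℝ) : quant n (quant (n + 1) x) = quant n x := by
  funext i
  have hfloor (t : ℝ) : ⌊(2 : ℝ) ^ n * t⌋ = ⌊(2 : ℝ) ^ (n + 1) * t⌋ / 2 := by
    rw [show (2 : ℝ) ^ n * t = (2 : ℝ) ^ (n + 1) * t / (2 : ℕ) by push_cast; ring,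
      Int.floor_div_natCast]
    rfl
  simp only [quant]
  rw [hfloor (x i), hfloor, mul_div_cancel₀ _ (by positivity), Int.floor_intCast]

lemma tendsto_quant (x : ι → ℝ) : Tendsto (fun n => quant n x) atTop (𝓝 x) := by
  refine tendsto_pi_nhds.2 fun i => ?_
  have hlower : Tendsto (fun n : ℕ => x i - (1 / 2) ^ n) atTop (𝓝 (x i)) := by
    simpa using tendsto_const_nhds.sub
      (tendsto_pow_atTop_nhds_zero_of_lt_one (by norm_num : (0 : ℝ) ≤ 1 / 2) (by norm_num))
  refine tendsto_of_tendsto_of_tendsto_of_le_of_le hlower tendsto_const_nhds (fun n => ?_)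
    (fun n => ?_)
  · have hx : x i ≤ (⌊(2 : ℝ) ^ n * x i⌋ + 1) / 2 ^ n := by
      rw [le_div_iff₀ (by positivity)]
      linarith [Int.lt_floor_add_one ((2 : ℝ) ^ n * x i)]
    rw [add_div, ← one_div_pow] at hx
    simp only [quant]
    linarith
  · simp only [quant]
    rw [div_le_iff₀ (by positivity), mul_comm]
    exact Int.floor_le _

lemma antitone_quant_cell (x : ι → ℝ) :
    Antitone fun n => quant (ι := ι) n ⁻¹' {quant n x} := by
  refine antitone_nat_of_succ_le fun n y (hy : quant (n + 1) y = quant (n + 1) x) => ?_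
  change quant n y = quant n x
  rw [← quant_quant_succ n y, hy, quant_quant_succ]

lemma iInter_quant_cell (x : ι → ℝ) :
    ⋂ n, quant (ι := ι) n ⁻¹' {quant n x} = {x} := by
  refine subset_antisymm (fun y hy => ?_) (fun y (hy : y = x) => mem_iInter.2 fun n => hy ▸ rfl)
  have hcell : ∀ n, quant n y = quant n x := mem_iInter.1 hy
  exact tendsto_nhds_unique (tendsto_quant y) ((tendsto_quant x).congr fun n => (hcell n).symm)

end Quantization

section QuantizedEntropy

lemma monotone_surprisal_quant_cell {ι : Type*} (ν : Measure (ι → ℝ)) (x : ι → ℝ) :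
    Monotone fun n => surprisal (ν (quant n ⁻¹' {quant n x})) :=
  fun _ _ hmn => antitone_surprisal (measure_mono (antitone_quant_cell x hmn))

variable {ι : Type*} [Fintype ι] (ν : Measure (ι → ℝ)) [IsFiniteMeasure ν]

lemma surprisal_measure_singleton_eq_iSup (x : ι → ℝ) :
    surprisal (ν {x}) = ⨆ n, surprisal (ν (quant n ⁻¹' {quant n x})) := by
  have hcell : Tendsto (fun n => ν (quant n ⁻¹' {quant n x})) atTop (𝓝 (ν {x})) := by
    rw [← iInter_quant_cell x]
    exact tendsto_measure_iInter_atTop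
      (fun n => (measurable_quant n (measurableSet_singleton _)).nullMeasurableSet)
      (antitone_quant_cell x) ⟨0, measure_ne_top ν _⟩
  exact tendsto_nhds_unique (continuous_surprisal.continuousAt.tendsto.comp hcell)
    (tendsto_atTop_iSup (monotone_surprisal_quant_cell ν x))

lemma measurable_surprisal_quant_cell (n : ℕ) :
    Measurable fun x => surprisal (ν (quant (ι := ι) n ⁻¹' {quant n x})) := by
  simp_rw [← Measure.map_apply (measurable_quant n) (measurableSet_singleton _)]
  exact (measurable_surprisal_measure_singleton _).comp (measurable_quant n)

lemma pmfEntropy_map_quant_eq_lintegral (n : ℕ) :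
    pmfEntropy (ν.map (quant n)) = ∫⁻ x, surprisal (ν (quant n ⁻¹' {quant n x})) ∂ν :=
  pmfEntropy_map_eq_lintegral ν (measurable_quant n) (countable_range_quant n)

lemma monotone_pmfEntropy_map_quant :
    Monotone fun n => pmfEntropy (ν.map (quant (ι := ι) n)) := fun _ _ hmn => by
  simp only [pmfEntropy_map_quant_eq_lintegral]
  exact lintegral_mono fun x => monotone_surprisal_quant_cell ν x hmn

theorem entropy_eq_iSup_pmfEntropy_map_quant :
    entropy ν = ⨆ n, pmfEntropy (ν.map (quant (ι := ι) n)) := by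
  simp_rw [pmfEntropy_map_quant_eq_lintegral, entropy, surprisal_measure_singleton_eq_iSup ν]
  exact lintegral_iSup (measurable_surprisal_quant_cell ν)
    fun _ _ hmn x => monotone_surprisal_quant_cell ν x hmn

end QuantizedEntropy

lemma measurable_entropy_kernel {γ ι : Type*} [MeasurableSpace γ] [Fintype ι]
    (κ : Kernel γ (ι → ℝ)) [IsFiniteKernel κ] : Measurable fun w => entropy (κ w) := by
  simp_rw [entropy_eq_iSup_pmfEntropy_map_quant]
  exact Measurable.iSup fun n =>
    measurable_pmfEntropy_map κ (measurable_quant n) (countable_range_quant n)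

theorem infoLoss_eq_lintegral_entropy {α γ ι : Type*} [MeasurableSpace α] [MeasurableSpace γ]
    [Fintype ι] (μ : Measure α) [IsFiniteMeasure μ] {X : α → ι → ℝ} (W : α → γ)
    (hX : Measurable X) :
    infoLoss μ X W = ∫⁻ w, entropy (condDistrib X W μ w) ∂(μ.map W) := by
  have hquant (n : ℕ) : condEntQ μ X W n =
      ∫⁻ w, pmfEntropy ((condDistrib X W μ w).map (quant n)) ∂(μ.map W) := by
    refine lintegral_congr_ae ?_
    filter_upwards [condDistrib_comp W hX.aemeasurable (measurable_quant (ι := ι) n)] with w hw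
    exact congrArg pmfEntropy (hw.trans (Kernel.map_apply _ (measurable_quant n) w))
  simp_rw [infoLoss, hquant, entropy_eq_iSup_pmfEntropy_map_quant]
  exact (lintegral_iSup
    (fun n => measurable_pmfEntropy_map _ (measurable_quant n) (countable_range_quant n))
    fun _ _ hmn w => monotone_pmfEntropy_map_quant _ hmn).symm

lemma ae_ae_condDistrib_apply_eq {α β Ω : Type*} [MeasurableSpace α] [MeasurableSpace β]
    [MeasurableEq β] [MeasurableSpace Ω] [StandardBorelSpace Ω] [Nonempty Ω] {μ : Measure α}
    [IsFiniteMeasure μ] {X : α → Ω} {g : Ω → β} (hX : Measurable X) (hg : Measurable g) :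
    ∀ᵐ y ∂(μ.map fun a => g (X a)), ∀ᵐ x ∂(condDistrib X (fun a => g (X a)) μ y), g x = y := by
  refine Measure.ae_ae_of_ae_compProd (p := fun p : β × Ω => g p.2 = p.1) ?_
  rw [compProd_map_condDistrib hX.aemeasurable]
  exact (ae_map_iff ((hg.comp hX).prodMk hX).aemeasurable
    (measurableSet_eq_fun (hg.comp measurable_snd) measurable_fst)).2 (ae_of_all _ fun _ => rfl)

section CondDistrib

variable {α β γ : Type*} [MeasurableSpace α] [MeasurableSpace β] [StandardBorelSpace β]
  [Nonempty β] [MeasurableSpace γ] {μ : Measure α} [IsFiniteMeasure μ] {Y : α → β} {W : α → γ}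

lemma setLIntegral_lintegral_condDistrib {f : β → ℝ≥0∞} (hY : Measurable Y) (hW : Measurable W)
    (hf : Measurable f) {s : Set γ} (hs : MeasurableSet s) :
    ∫⁻ w in s, ∫⁻ y, f y ∂(condDistrib Y W μ w) ∂(μ.map W) = ∫⁻ a in W ⁻¹' s, f (Y a) ∂μ := by
  have h := Measure.setLIntegral_compProd (μ := μ.map W) (κ := condDistrib Y W μ)
    (f := fun p => f p.2) (hf.comp measurable_snd) hs MeasurableSet.univ
  simp only [Measure.restrict_univ] at h
  rw [← h, compProd_map_condDistrib hY.aemeasurable,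
    setLIntegral_map (f := fun p : γ × β => f p.2) (hs.prod .univ) (hf.comp measurable_snd)
      (hW.prodMk hY)]
  simp [mk_preimage_prod]

lemma lintegral_lintegral_condDistrib {f : β → ℝ≥0∞} (hY : Measurable Y) (hW : Measurable W)
    (hf : Measurable f) :
    ∫⁻ w, ∫⁻ y, f y ∂(condDistrib Y W μ w) ∂(μ.map W) = ∫⁻ y, f y ∂(μ.map Y) := by
  rw [← Measure.lintegral_bind (Kernel.measurable _).aemeasurable hf.aemeasurable,
    condDistrib_comp_map hW.aemeasurable hY.aemeasurable]

lemma condDistrib_comp_ae_eq_comp {Ω : Type*} [MeasurableSpace Ω] [StandardBorelSpace Ω]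
    [Nonempty Ω] {X : α → Ω} {h : β → γ} (hX : Measurable X) (hY : Measurable Y)
    (hh : Measurable h) :
    condDistrib X (fun a => h (Y a)) μ =ᵐ[μ.map fun a => h (Y a)]
      condDistrib X Y μ ∘ₖ condDistrib Y (fun a => h (Y a)) μ := by
  have hZ : Measurable fun a => h (Y a) := hh.comp hY
  refine condDistrib_ae_eq_of_measure_eq_compProd _ hX.aemeasurable
    (Measure.ext_prod fun {s t} hs ht => ?_)
  rw [Measure.map_apply (hZ.prodMk hX) (hs.prod ht), mk_preimage_prod,
    Measure.compProd_apply_prod hs ht]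
  simp_rw [Kernel.comp_apply' _ _ _ ht]
  rw [setLIntegral_lintegral_condDistrib hY hZ (Kernel.measurable_coe _ ht) hs]
  exact (setLIntegral_preimage_condDistrib hY hX.aemeasurable ht (hh hs)).symm

lemma ae_ae_condDistrib_of_ae {p : β → Prop} (hY : Measurable Y) (hW : Measurable W)
    (hp : ∀ᵐ y ∂(μ.map Y), p y) : ∀ᵐ w ∂(μ.map W), ∀ᵐ y ∂(condDistrib Y W μ w), p y := by
  rw [← condDistrib_comp_map hW.aemeasurable hY.aemeasurable] at hp
  exact Measure.ae_ae_of_ae_comp hp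

end CondDistrib

section ChainRule

variable {E F : Type*} [MeasurableSpace E] [MeasurableSingletonClass E] [MeasurableSpace F]
  [MeasurableSingletonClass F] {σ : Measure F} {π : Kernel F E} {g : E → F}

lemma bind_apply_singleton_of_ae_fiber (hfib : ∀ᵐ y ∂σ, ∀ᵐ x ∂π y, g x = y) (x : E) :
    (π ∘ₘ σ) {x} = σ {g x} * π (g x) {x} := by
  have hfiber : (fun y => π y {x}) =ᵐ[σ] ({g x} : Set F).indicator fun _ => π (g x) {x} := by
    filter_upwards [hfib] with y hy
    by_cases hxy : g x = y
    · simp [hxy]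
    · rw [indicator_of_notMem (mem_singleton_iff.not.2 (Ne.symm hxy))]
      exact measure_mono_null (singleton_subset_iff.2 hxy) (ae_iff.1 hy)
  rw [Measure.bind_apply (measurableSet_singleton x) (Kernel.measurable π).aemeasurable,
    lintegral_congr_ae hfiber, lintegral_indicator_const (measurableSet_singleton _), mul_comm]

theorem entropy_bind [IsProbabilityMeasure σ] [IsMarkovKernel π]
    (hfib : ∀ᵐ y ∂σ, ∀ᵐ x ∂π y, g x = y) :
    entropy (π ∘ₘ σ) = ∫⁻ y, entropy (π y) ∂σ + entropy σ := by
  have hsplit : ∀ᵐ y ∂σ, ∀ᵐ x ∂π y,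
      surprisal ((π ∘ₘ σ) {x}) = surprisal (σ {y}) + surprisal (π y {x}) := by
    filter_upwards [hfib] with y hy
    filter_upwards [hy] with x hx
    rw [bind_apply_singleton_of_ae_fiber hfib, hx, surprisal_mul prob_le_one prob_le_one]
  calc entropy (π ∘ₘ σ)
      = ∫⁻ y, ∫⁻ x, surprisal ((π ∘ₘ σ) {x}) ∂π y ∂σ :=
        Measure.lintegral_bind (Kernel.measurable π).aemeasurable
          (measurable_surprisal_measure_singleton _).aemeasurable
    _ = ∫⁻ y, surprisal (σ {y}) + entropy (π y) ∂σ := by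
        refine lintegral_congr_ae (hsplit.mono fun y hy => ?_)
        dsimp only
        rw [lintegral_congr_ae hy, lintegral_add_left measurable_const, lintegral_const,
          measure_univ, mul_one, entropy]
    _ = ∫⁻ y, entropy (π y) ∂σ + entropy σ := by
        rw [lintegral_add_left (measurable_surprisal_measure_singleton σ), add_comm, entropy]

end ChainRule

theorem infoLoss_cascade_general
    {α ι κ lt : Type*} [MeasurableSpace α]
    [Fintype ι] [Fintype κ] [Fintype lt]
    (μ : Measure α) [IsProbabilityMeasure μ]
    (X : α → ι → ℝ) (g : (ι → ℝ) → κ → ℝ) (h : (κ → ℝ) → lt → ℝ)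
    (hX : Measurable X) (hg : Measurable g) (hh : Measurable h) :
    infoLoss μ X (fun a => h (g (X a))) =
      infoLoss μ X (fun a => g (X a)) +
        infoLoss μ (fun a => g (X a)) (fun a => h (g (X a))) := by
  set Y := fun a => g (X a)
  set Z := fun a => h (Y a)
  have hY : Measurable Y := hg.comp hX
  have hZ : Measurable Z := hh.comp hY
  have hchain : ∀ᵐ z ∂(μ.map Z), entropy (condDistrib X Z μ z) =
      ∫⁻ y, entropy (condDistrib X Y μ y) ∂(condDistrib Y Z μ z)
        + entropy (condDistrib Y Z μ z) := by
    filter_upwards [condDistrib_comp_ae_eq_comp hX hY hh,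
      ae_ae_condDistrib_of_ae hY hZ (ae_ae_condDistrib_apply_eq hX hg)] with z hz hfib
    rw [hz, Kernel.comp_apply]
    exact entropy_bind hfib
  rw [infoLoss_eq_lintegral_entropy μ Z hX, infoLoss_eq_lintegral_entropy μ Y hX,
    infoLoss_eq_lintegral_entropy μ Z hY, lintegral_congr_ae hchain,
    lintegral_add_right _ (measurable_entropy_kernel _),
    lintegral_lintegral_condDistrib hY hZ (measurable_entropy_kernel _)]

/-- **Information loss of a cascade.**  For a random variable `X` on a standard
probability space and measurable functions `g`, `h`, with `Y = g(X)` and `Z = h(Y)`,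
the information loss is additive:
`L(X→Z) = L(X→Y) + L(Y→Z)`, i.e. `H(X|Z) = H(X|Y) + H(Y|Z)`. -/
theorem infoLoss_cascade
    {α ι κ lt : Type*} [MeasurableSpace α] [StandardBorelSpace α] [Nonempty α]
    [Fintype ι] [Fintype κ] [Fintype lt]
    (μ : Measure α) [IsProbabilityMeasure μ]
    (X : α → ι → ℝ) (g : (ι → ℝ) → κ → ℝ) (h : (κ → ℝ) → lt → ℝ)
    (hX : Measurable X) (hg : Measurable g) (hh : Measurable h) :
    infoLoss μ X (fun a => h (g (X a))) =
      infoLoss μ X (fun a => g (X a)) +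
        infoLoss μ (fun a => g (X a)) (fun a => h (g (X a))) :=
  infoLoss_cascade_general μ X g h hX hg hh

end
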